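/- arXiv:2507.00160 — 7 statements merged into one kernel-verified Lean document; each statement's English description precedes it below -/
import Mathlib

section
/- Let p be a real number with p ≥ 2. Then for all real numbers a and b, (|a|^{p-2}a − |b|^{p-2}b)(a − b) ≥ (1/2)|a|^{p-2}(a − b)^2 + (1/2)|b|^{p-2}(a − b)^2. -/
/-!
With `A = |a|^{p-2}` and `B = |b|^{p-2}`, the difference of the two sides is exactly
`(A - B)(a² - b²) / 2`. Both `|t|^{p-2}` and `t²` are nondecreasing functions of `|t|` when
`p ≥ 2`, so the two factors have the same sign.
-/

lemma monovary_abs_rpow_sq {r : ℝ} (hr : 0 ≤ r) :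
    Monovary (fun t : ℝ => |t| ^ r) (fun t => t ^ 2) := fun a _ hab =>
  Real.rpow_le_rpow (abs_nonneg a) (sq_lt_sq.mp hab).le hr

lemma abs_rpow_sub_mul_sq_sub_nonneg {r : ℝ} (hr : 0 ≤ r) (a b : ℝ) :
    0 ≤ (|a| ^ r - |b| ^ r) * (a ^ 2 - b ^ 2) :=
  (monovary_abs_rpow_sq hr).sub_mul_sub_nonneg b a

/-- For `p ≥ 2` and all real `a, b`,
`(|a|^{p-2}a − |b|^{p-2}b)(a − b) ≥ (1/2)|a|^{p-2}(a − b)^2 + (1/2)|b|^{p-2}(a − b)^2`,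
where the powers are real (rpow) powers. -/
theorem signedPower_monotonicity (p : ℝ) (hp : 2 ≤ p) (a b : ℝ) :
    (|a| ^ (p - 2) * a - |b| ^ (p - 2) * b) * (a - b) ≥
      (1 / 2) * |a| ^ (p - 2) * (a - b) ^ 2 + (1 / 2) * |b| ^ (p - 2) * (a - b) ^ 2 := by
  have key := abs_rpow_sub_mul_sq_sub_nonneg (sub_nonneg.mpr hp) a b
  linear_combination (1 / 2) * key
end

section
/- Let (Ω, μ) be a measure space, p a real number with p ≥ 2, and u, v ∈ L^p(μ) real-valued. Then ∫_Ω (|u|^{p-2}u − |v|^{p-2}v)(u − v) dμ ≥ 2^{-(p-2)} ‖u − v‖_{L^p(μ)}^p. -/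
open MeasureTheory

/-!
Write `φ(s) = |s|^{p-2} s` and `q = p - 1 ≥ 1`, so that `φ(s) = s^q` for `s ≥ 0` and `φ` is odd.
It suffices to integrate the pointwise inequality `2^{2-p} |a - b|^p ≤ (φ a - φ b)(a - b)`, which
for `b ≤ a` follows from `(a - b)^q ≤ 2^{q-1} (φ a - φ b)`. If `a` and `b` have the same sign this
is superadditivity of `t ↦ t^q` on `[0, ∞)` (even without the factor `2^{q-1} ≥ 1`); if `b < 0 < a`
it is the convexity bound `(a + |b|)^q ≤ 2^{q-1} (a^q + |b|^q)`. The integrand is integrable since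
`|φ a - φ b| |a - b| ≤ (|a|^q + |b|^q)(|a| + |b|) ≤ 2 (|a|^p + |b|^p)` (Chebyshev's sum inequality).
-/

/-- The `L^r(μ)` norm of a real-valued function, `‖f‖_{L^r} = (∫ |f|^r dμ)^{1/r}`. -/
noncomputable def lpNorm {Ω : Type*} [MeasurableSpace Ω] (μ : Measure Ω) (r : ℝ)
    (f : Ω → ℝ) : ℝ :=
  (∫ x, |f x| ^ r ∂μ) ^ (1 / r)

lemma lpNorm_rpow {Ω : Type*} [MeasurableSpace Ω] (μ : Measure Ω) {r : ℝ} (hr : r ≠ 0)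
    (f : Ω → ℝ) : lpNorm μ r f ^ r = ∫ x, |f x| ^ r ∂μ := by
  rw [_root_.lpNorm, ← Real.rpow_mul (integral_nonneg fun x => by positivity),
    one_div_mul_cancel hr, Real.rpow_one]

lemma Real.rpow_add_le_mul_rpow_add_rpow {x y q : ℝ} (hx : 0 ≤ x) (hy : 0 ≤ y) (hq : 1 ≤ q) :
    (x + y) ^ q ≤ 2 ^ (q - 1) * (x ^ q + y ^ q) := by
  lift x to NNReal using hx
  lift y to NNReal using hy
  exact_mod_cast NNReal.rpow_add_le_mul_rpow_add_rpow x y hq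

lemma Real.sub_rpow_le_rpow_sub_rpow {q a b : ℝ} (hq : 1 ≤ q) (hb : 0 ≤ b) (hba : b ≤ a) :
    (a - b) ^ q ≤ a ^ q - b ^ q := by
  have h := Real.add_rpow_le_rpow_add (sub_nonneg.2 hba) hb hq
  rw [sub_add_cancel] at h
  linarith

lemma Real.rpow_add_rpow_mul_add_le {q x y : ℝ} (hq : 0 ≤ q) (hx : 0 ≤ x) (hy : 0 ≤ y) :
    (x ^ q + y ^ q) * (x + y) ≤ 2 * (x ^ q * x + y ^ q * y) := by
  suffices 0 ≤ (x ^ q - y ^ q) * (x - y) by linarith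
  rcases le_total x y with hxy | hxy
  · exact mul_nonneg_of_nonpos_of_nonpos
      (sub_nonpos.2 (Real.rpow_le_rpow hx hxy hq)) (sub_nonpos.2 hxy)
  · exact mul_nonneg (sub_nonneg.2 (Real.rpow_le_rpow hy hxy hq)) (sub_nonneg.2 hxy)

lemma abs_rpow_sub_two_mul_self {p x : ℝ} (hp : p ≠ 1) (hx : 0 ≤ x) :
    |x| ^ (p - 2) * x = x ^ (p - 1) := by
  rw [abs_of_nonneg hx, show p - 1 = p - 2 + 1 by ring,
    Real.rpow_add_one' hx (by contrapose! hp; linarith)]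

lemma abs_abs_rpow_sub_two_mul_self {p : ℝ} (hp : p ≠ 1) (x : ℝ) :
    |(|x| ^ (p - 2) * x)| = |x| ^ (p - 1) := by
  rw [abs_mul, abs_of_nonneg (by positivity), ← abs_rpow_sub_two_mul_self hp (abs_nonneg x),
    abs_abs]

lemma abs_neg_rpow_mul_neg (r x : ℝ) : |-x| ^ r * -x = -(|x| ^ r * x) := by
  rw [abs_neg, mul_neg]

lemma sub_rpow_le_two_rpow_mul_signedPower_sub {p a b : ℝ} (hp : 2 ≤ p) (hba : b ≤ a) :
    (a - b) ^ (p - 1) ≤ 2 ^ (p - 2) * (|a| ^ (p - 2) * a - |b| ^ (p - 2) * b) := by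
  have hq : 1 ≤ p - 1 := by linarith
  have hp1 : p ≠ 1 := by linarith
  have same_sign : ∀ {a b : ℝ}, 0 ≤ b → b ≤ a →
      (a - b) ^ (p - 1) ≤ 2 ^ (p - 2) * (|a| ^ (p - 2) * a - |b| ^ (p - 2) * b) := by
    intro a b hb hba
    rw [abs_rpow_sub_two_mul_self hp1 (hb.trans hba), abs_rpow_sub_two_mul_self hp1 hb]
    have superadd := Real.sub_rpow_le_rpow_sub_rpow hq hb hba
    have one_le : (1 : ℝ) ≤ 2 ^ (p - 2) := Real.one_le_rpow one_le_two (by linarith)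
    have : 0 ≤ (a - b) ^ (p - 1) := Real.rpow_nonneg (sub_nonneg.2 hba) _
    nlinarith
  rcases le_total 0 b with hb | hb
  · exact same_sign hb hba
  rcases le_total a 0 with ha | ha
  · have h := same_sign (neg_nonneg.2 ha) (neg_le_neg hba)
    rwa [abs_neg_rpow_mul_neg, abs_neg_rpow_mul_neg, neg_sub_neg, sub_neg_eq_add,
      neg_add_eq_sub] at h
  · have hb' : |b| ^ (p - 2) * b = -(-b) ^ (p - 1) := by
      rw [← abs_rpow_sub_two_mul_self hp1 (neg_nonneg.2 hb), abs_neg_rpow_mul_neg, neg_neg]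
    have h := Real.rpow_add_le_mul_rpow_add_rpow ha (neg_nonneg.2 hb) hq
    rw [abs_rpow_sub_two_mul_self hp1 ha, hb', sub_neg_eq_add]
    rwa [← sub_eq_add_neg, show p - 1 - 1 = p - 2 by ring] at h

theorem two_rpow_neg_mul_abs_sub_rpow_le_signedPower_sub_mul_sub {p : ℝ} (hp : 2 ≤ p) (a b : ℝ) :
    2 ^ (-(p - 2)) * |a - b| ^ p ≤ (|a| ^ (p - 2) * a - |b| ^ (p - 2) * b) * (a - b) := by
  wlog hba : b ≤ a generalizing a b
  · convert this b a (le_of_not_ge hba) using 1 <;> [rw [abs_sub_comm]; ring]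
  have hab : 0 ≤ a - b := sub_nonneg.2 hba
  rw [abs_of_nonneg hab, Real.rpow_neg zero_le_two, inv_mul_le_iff₀ (by positivity)]
  calc (a - b) ^ p = (a - b) ^ (p - 1) * (a - b) := by
        rw [← Real.rpow_add_one' hab (by linarith), sub_add_cancel]
    _ ≤ 2 ^ (p - 2) * (|a| ^ (p - 2) * a - |b| ^ (p - 2) * b) * (a - b) :=
        mul_le_mul_of_nonneg_right (sub_rpow_le_two_rpow_mul_signedPower_sub hp hba) hab
    _ = _ := mul_assoc _ _ _

lemma abs_signedPower_sub_mul_sub_le {p : ℝ} (hp : 1 < p) (a b : ℝ) :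
    |(|a| ^ (p - 2) * a - |b| ^ (p - 2) * b) * (a - b)| ≤ 2 * (|a| ^ p + |b| ^ p) := by
  have hp1 : p ≠ 1 := hp.ne'
  have rpow_succ : ∀ x : ℝ, |x| ^ (p - 1) * |x| = |x| ^ p := fun x => by
    rw [← Real.rpow_add_one' (abs_nonneg x) (by linarith), sub_add_cancel]
  calc |(|a| ^ (p - 2) * a - |b| ^ (p - 2) * b) * (a - b)|
      ≤ (|a| ^ (p - 1) + |b| ^ (p - 1)) * (|a| + |b|) := by
        rw [abs_mul, ← abs_abs_rpow_sub_two_mul_self hp1, ← abs_abs_rpow_sub_two_mul_self hp1]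
        exact mul_le_mul (abs_sub _ _) (abs_sub _ _) (abs_nonneg _) (by positivity)
    _ ≤ 2 * (|a| ^ (p - 1) * |a| + |b| ^ (p - 1) * |b|) :=
        Real.rpow_add_rpow_mul_add_le (by linarith) (abs_nonneg a) (abs_nonneg b)
    _ = 2 * (|a| ^ p + |b| ^ p) := by rw [rpow_succ, rpow_succ]

lemma integrable_signedPower_sub_mul_sub {Ω : Type*} [MeasurableSpace Ω] {μ : Measure Ω} {p : ℝ}
    (hp : 1 < p) {u v : Ω → ℝ} (hum : AEMeasurable u μ) (hvm : AEMeasurable v μ)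
    (hu : Integrable (fun x => |u x| ^ p) μ)
    (hv : Integrable (fun x => |v x| ^ p) μ) :
    Integrable (fun x => (|u x| ^ (p - 2) * u x - |v x| ^ (p - 2) * v x) * (u x - v x)) μ :=
  ((hu.add hv).const_mul 2).mono' (by fun_prop : AEMeasurable _ μ).aestronglyMeasurable
    (ae_of_all _ fun x => abs_signedPower_sub_mul_sub_le hp (u x) (v x))

/-- On a measure space `(Ω, μ)`, for `p ≥ 2` and `u, v ∈ L^p(μ)`,
`∫ (|u|^{p-2}u − |v|^{p-2}v)(u − v) dμ ≥ 2^{-(p-2)} ‖u − v‖_{L^p(μ)}^p`. -/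
theorem integrated_signedPower_coercivity {Ω : Type*} [MeasurableSpace Ω] (μ : Measure Ω)
    (p : ℝ) (hp : 2 ≤ p) (u v : Ω → ℝ)
    (hum : Measurable u) (hvm : Measurable v)
    (hu : Integrable (fun x => |u x| ^ p) μ)
    (hv : Integrable (fun x => |v x| ^ p) μ) :
    (∫ x, (|u x| ^ (p - 2) * u x - |v x| ^ (p - 2) * v x) * (u x - v x) ∂μ) ≥
      (2 : ℝ) ^ (-(p - 2)) * lpNorm μ p (fun x => u x - v x) ^ p := by
  rw [ge_iff_le, lpNorm_rpow μ (by linarith), ← integral_const_mul]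
  exact integral_mono_of_nonneg (ae_of_all _ fun x => by positivity)
    (integrable_signedPower_sub_mul_sub (by linarith) hum.aemeasurable hvm.aemeasurable hu hv)
    (ae_of_all _ fun x => two_rpow_neg_mul_abs_sub_rpow_le_signedPower_sub_mul_sub hp (u x) (v x))
end

section
/- Let p be a real number with p ≥ 2. Then for all real numbers a and b, ||a|^{p-2}a − |b|^{p-2}b| ≤ (p − 1)|a − b|(|a| + |b|)^{p-2}. -/
/-!
With `q = p - 2 ≥ 0`, the signed power `x ↦ |x| ^ q * x` is differentiable with derivative
`(q + 1) * |x| ^ q`; between `a` and `b` this is at most `(q + 1) * (|a| + |b|) ^ q`, and the mean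
value inequality gives the bound.
-/

open Filter Set Topology

theorem hasDerivAt_abs_rpow_mul_self {q : ℝ} (hq : 0 ≤ q) (t : ℝ) :
    HasDerivAt (fun x : ℝ => |x| ^ q * x) ((q + 1) * |t| ^ q) t := by
  rcases eq_or_ne t 0 with rfl | ht
  · have hslope : slope (fun x : ℝ => |x| ^ q * x) 0 =ᶠ[𝓝[≠] 0] fun x => |x| ^ q := by
      filter_upwards [self_mem_nhdsWithin] with x hx
      rw [slope_def_field, sub_zero, abs_zero, mul_zero, sub_zero, mul_div_cancel_right₀ _ hx]
    -- `0 ^ q` is `1` for `q = 0` and `0` for `q > 0`; either way `q * 0 ^ q = 0`.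
    have hzero : (q + 1) * |(0 : ℝ)| ^ q = |(0 : ℝ)| ^ q := by
      rcases hq.eq_or_lt with rfl | hq
      · simp
      · simp [Real.zero_rpow hq.ne']
    rw [hasDerivAt_iff_tendsto_slope, hzero]
    refine Tendsto.congr' hslope.symm ?_
    exact ((Real.continuous_rpow_const hq).comp continuous_abs).continuousAt.tendsto.mono_left
      nhdsWithin_le_nhds
  · have h := ((hasDerivAt_abs ht).rpow_const (p := q) (Or.inl (abs_ne_zero.2 ht))).mul
      (hasDerivAt_id t)
    refine h.congr_deriv ?_
    rw [Real.rpow_sub_one (abs_ne_zero.2 ht), id, mul_right_comm _ _ t, mul_right_comm _ _ t,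
      sign_mul_self]
    field_simp

theorem abs_le_abs_add_abs_of_mem_uIcc {a b t : ℝ} (ht : t ∈ uIcc a b) : |t| ≤ |a| + |b| := by
  rcases mem_uIcc.1 ht with ⟨h₁, h₂⟩ | ⟨h₁, h₂⟩
  · exact (abs_le_max_abs_abs h₁ h₂).trans (max_le_add_of_nonneg (abs_nonneg a) (abs_nonneg b))
  · exact (abs_le_max_abs_abs h₁ h₂).trans
      ((max_le_add_of_nonneg (abs_nonneg b) (abs_nonneg a)).trans_eq (add_comm _ _))

theorem abs_abs_rpow_mul_self_sub_le {q : ℝ} (hq : 0 ≤ q) (a b : ℝ) :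
    |(|a| ^ q * a - |b| ^ q * b)| ≤ (q + 1) * (|a| + |b|) ^ q * |a - b| := by
  have hderiv_le : ∀ t ∈ uIcc a b, ‖(q + 1) * |t| ^ q‖ ≤ (q + 1) * (|a| + |b|) ^ q := by
    intro t ht
    rw [Real.norm_of_nonneg (by positivity)]
    have := abs_le_abs_add_abs_of_mem_uIcc ht
    gcongr
  simpa only [Real.norm_eq_abs] using Convex.norm_image_sub_le_of_norm_hasDerivWithin_le
    (fun t _ => (hasDerivAt_abs_rpow_mul_self hq t).hasDerivWithinAt) hderiv_le
    (convex_uIcc a b) right_mem_uIcc left_mem_uIcc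

/-- For `p ≥ 2` and all real `a, b`,
`||a|^{p-2}a − |b|^{p-2}b| ≤ (p − 1)|a − b|(|a| + |b|)^{p-2}`,
where the powers are real (rpow) powers (so `0^0 = 1` when `p = 2`). -/
theorem signedPower_lipschitz (p : ℝ) (hp : 2 ≤ p) (a b : ℝ) :
    |(|a| ^ (p - 2) * a - |b| ^ (p - 2) * b)| ≤ (p - 1) * |a - b| * (|a| + |b|) ^ (p - 2) :=
  (abs_abs_rpow_mul_self_sub_le (sub_nonneg.2 hp) a b).trans_eq (by ring)
end

section
/- Let (Ω, μ) be a measure space, p a real number with p ≥ 2, and u, v ∈ L^{2p-2}(μ) real-valued. Then |u|^{p-2}u belongs to L^2(μ) with ‖|u|^{p-2}u‖_{L^2(μ)} = ‖u‖_{L^{2p-2}(μ)}^{p-1}, and ‖|u|^{p-2}u − |v|^{p-2}v‖_{L^2(μ)} ≤ (p − 1)(‖u‖_{L^{2p-2}(μ)} + ‖v‖_{L^{2p-2}(μ)})^{p-2} ‖u − v‖_{L^{2p-2}(μ)}. In particular, the map u ↦ −|u|^{p-2}u is Lipschitz on balls from L^{2p-2}(μ) to L^2(μ). -/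
/-!
For `a, b` of the same sign, the pointwise bound
`|φ a - φ b| ≤ (p - 1) (|a| + |b|)^(p-2) |a - b|` for `φ s = |s|^(p-2) s` is the tangent-line
inequality of the convex function `t ↦ t^(p-1)`; for opposite signs it is the superadditivity of
that function. Hölder's inequality with exponents `(2p-2)/(p-2)` and `2p-2`, whose reciprocals add
up to `1/2`, followed by Minkowski's inequality for `|u| + |v|`, turns it into the `L²` estimate.
The norm identity is `|φ u|² = |u|^(2p-2)`.
-/

open MeasureTheory

noncomputable def signedPow (p a : ℝ) : ℝ :=
  |a| ^ (p - 2) * a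

section SignedPow

variable {p : ℝ}

lemma signedPow_neg (a : ℝ) : signedPow p (-a) = -signedPow p a := by
  simp only [signedPow, abs_neg, mul_neg]

lemma signedPow_of_nonneg (hp : p ≠ 1) {a : ℝ} (ha : 0 ≤ a) :
    signedPow p a = a ^ (p - 1) := by
  rw [signedPow, abs_of_nonneg ha, ← Real.rpow_add_one' ha (by contrapose! hp; linarith)]
  ring_nf

lemma abs_signedPow (hp : p ≠ 1) (a : ℝ) : |signedPow p a| = |a| ^ (p - 1) := by
  have h := signedPow_of_nonneg hp (abs_nonneg a)
  rw [signedPow, abs_abs] at h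
  rw [signedPow, abs_mul, abs_of_nonneg (by positivity), h]

lemma measurable_signedPow (p : ℝ) : Measurable (signedPow p) :=
  (measurable_id.abs.pow_const _).mul measurable_id

lemma Real.rpow_sub_rpow_le_mul_sub {q a b : ℝ} (hq : 1 ≤ q) (hb : 0 ≤ b) (hba : b ≤ a) :
    a ^ q - b ^ q ≤ q * a ^ (q - 1) * (a - b) := by
  rcases hba.eq_or_lt with rfl | hlt
  · simp
  have hslope := (convexOn_rpow hq).slope_le_of_hasDerivAt hb (hb.trans hlt.le) hlt
    (Real.hasDerivAt_rpow_const (Or.inr hq))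
  rwa [slope_def_field, div_le_iff₀ (sub_pos.2 hlt)] at hslope

lemma abs_signedPow_sub_signedPow_le_of_abs_le (hp : 2 ≤ p) {a b : ℝ} (hba : |b| ≤ a) :
    |signedPow p a - signedPow p b| ≤ (p - 1) * (|a| + |b|) ^ (p - 2) * |a - b| := by
  have hp1 : p ≠ 1 := by linarith
  have ha : 0 ≤ a := (abs_nonneg b).trans hba
  rw [abs_of_nonneg ha, signedPow_of_nonneg hp1 ha]
  rcases le_or_gt 0 b with hb | hb
  · have hba' : b ≤ a := (le_abs_self b).trans hba
    rw [signedPow_of_nonneg hp1 hb, abs_of_nonneg hb,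
      abs_of_nonneg (sub_nonneg.2 (Real.rpow_le_rpow hb hba' (by linarith))),
      abs_of_nonneg (sub_nonneg.2 hba')]
    calc a ^ (p - 1) - b ^ (p - 1) ≤ (p - 1) * a ^ (p - 1 - 1) * (a - b) :=
          Real.rpow_sub_rpow_le_mul_sub (by linarith) hb hba'
      _ ≤ (p - 1) * (a + b) ^ (p - 2) * (a - b) := by
          rw [show p - 1 - 1 = p - 2 by ring]
          gcongr
          · linarith
          · linarith
  · have hab : 0 ≤ a - b := by linarith
    rw [← neg_neg b, signedPow_neg, signedPow_of_nonneg hp1 (by linarith), neg_neg, abs_of_neg hb,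
      sub_neg_eq_add, abs_of_nonneg (add_nonneg (by positivity) (Real.rpow_nonneg (by linarith) _)),
      abs_of_nonneg hab]
    calc a ^ (p - 1) + (-b) ^ (p - 1) ≤ (a + -b) ^ (p - 1) :=
          Real.add_rpow_le_rpow_add ha (by linarith) (by linarith)
      _ = (a - b) ^ (p - 2) * (a - b) := by
          rw [← Real.rpow_add_one' (by linarith) (by linarith)]; ring_nf
      _ ≤ (p - 1) * (a + -b) ^ (p - 2) * (a - b) := by
          rw [← sub_eq_add_neg, mul_assoc]
          exact le_mul_of_one_le_left (mul_nonneg (Real.rpow_nonneg hab _) hab) (by linarith)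

theorem abs_signedPow_sub_signedPow_le (hp : 2 ≤ p) (a b : ℝ) :
    |signedPow p a - signedPow p b| ≤ (p - 1) * (|a| + |b|) ^ (p - 2) * |a - b| := by
  wlog hba : |b| ≤ |a| generalizing a b
  · rw [abs_sub_comm, add_comm, abs_sub_comm a]
    exact this b a (le_of_not_ge hba)
  rcases le_or_gt 0 a with ha | ha
  · exact abs_signedPow_sub_signedPow_le_of_abs_le hp (by rwa [abs_of_nonneg ha] at hba)
  · have h := abs_signedPow_sub_signedPow_le_of_abs_le hp (a := -a) (b := -b)
      (by rwa [abs_neg, ← abs_of_neg ha])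
    rwa [signedPow_neg, signedPow_neg, neg_sub_neg, abs_sub_comm, abs_neg, abs_neg,
      neg_sub_neg, abs_sub_comm b] at h

end SignedPow

section Lp

variable {α : Type*} [MeasurableSpace α] {μ : Measure α} {p : ℝ}

open ENNReal

lemma lpNorm_eq_toReal_eLpNorm {r : ℝ} (hr : 0 < r) {f : α → ℝ}
    (hf : AEStronglyMeasurable f μ) :
    lpNorm μ r f = (eLpNorm f (ENNReal.ofReal r) μ).toReal := by
  rw [toReal_eLpNorm hf, lpNorm_eq_integral_norm_rpow_toReal (by simpa) ofReal_ne_top hf,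
    toReal_ofReal hr.le, _root_.lpNorm, one_div]
  simp only [Real.norm_eq_abs]

lemma integrable_abs_rpow_iff_memLp {r : ℝ} (hr : 0 < r) {f : α → ℝ}
    (hf : AEStronglyMeasurable f μ) :
    Integrable (fun x => |f x| ^ r) μ ↔ MemLp f (ENNReal.ofReal r) μ := by
  rw [← integrable_norm_rpow_iff hf (by simpa) ofReal_ne_top, toReal_ofReal hr.le]
  simp only [Real.norm_eq_abs]

lemma eLpNorm_norm_rpow_le {F : Type*} [NormedAddCommGroup F] (f : α → F) (q : ℝ≥0∞)
    {k : ℝ} (hk : 0 ≤ k) :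
    eLpNorm (fun x => ‖f x‖ ^ k) (q / ENNReal.ofReal k) μ ≤ eLpNorm f q μ ^ k := by
  rcases hk.eq_or_lt with rfl | hk
  · rcases eq_or_ne q 0 with rfl | hq
    · simp
    simp only [Real.rpow_zero, ofReal_zero, div_zero hq, eLpNorm_exponent_top, rpow_zero]
    exact eLpNormEssSup_le_of_ae_enorm_bound (ae_of_all _ fun _ => by simp)
  · rw [eLpNorm_norm_rpow f hk, ENNReal.div_mul_cancel (by simpa) ofReal_ne_top]

lemma eLpNorm_signedPow (hp : 1 < p) (u : α → ℝ) :
    eLpNorm (fun x => signedPow p (u x)) 2 μ =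
      eLpNorm u (ENNReal.ofReal (2 * p - 2)) μ ^ (p - 1) := by
  have h2p : ENNReal.ofReal (2 * p - 2) = 2 * ENNReal.ofReal (p - 1) := by
    rw [show 2 * p - 2 = 2 * (p - 1) by ring, ofReal_mul zero_le_two, ofReal_ofNat]
  rw [h2p, ← eLpNorm_norm_rpow u (by linarith)]
  refine eLpNorm_congr_norm_ae (ae_of_all _ fun x => ?_)
  rw [Real.norm_eq_abs, abs_signedPow hp.ne', Real.norm_of_nonneg (by positivity),
    Real.norm_eq_abs]

-- At `p = 2` the first exponent is `∞`, since `q / 0 = ∞` in `ℝ≥0∞`.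
lemma holderTriple_two_mul_sub_two (hp : 2 ≤ p) :
    HolderTriple (ENNReal.ofReal (2 * p - 2) / ENNReal.ofReal (p - 2))
      (ENNReal.ofReal (2 * p - 2)) 2 := by
  have hq : 0 < 2 * p - 2 := by linarith
  have hp1 : p - 1 ≠ 0 := by linarith
  constructor
  rw [ENNReal.inv_div (Or.inr ofReal_ne_top) (Or.inr (ofReal_pos.2 hq).ne'),
    ← ofReal_div_of_pos hq, ← ofReal_inv_of_pos hq,
    ← ofReal_add (div_nonneg (by linarith) hq.le) (by positivity),
    ← ofReal_ofNat 2, ← ofReal_inv_of_pos two_pos]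
  congr 1
  field_simp
  ring

lemma eLpNorm_abs_add_abs_le {q : ℝ≥0∞} (hq : 1 ≤ q) {u v : α → ℝ}
    (hu : AEStronglyMeasurable u μ) (hv : AEStronglyMeasurable v μ) :
    eLpNorm (fun x => |u x| + |v x|) q μ ≤ eLpNorm u q μ + eLpNorm v q μ :=
  (eLpNorm_add_le hu.norm hv.norm hq).trans_eq (by simp only [eLpNorm_norm])

theorem eLpNorm_signedPow_sub_le (hp : 2 ≤ p) {u v : α → ℝ}
    (hu : AEStronglyMeasurable u μ) (hv : AEStronglyMeasurable v μ) :
    eLpNorm (fun x => signedPow p (u x) - signedPow p (v x)) 2 μ ≤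
      ENNReal.ofReal (p - 1) *
        (eLpNorm u (ENNReal.ofReal (2 * p - 2)) μ +
          eLpNorm v (ENNReal.ofReal (2 * p - 2)) μ) ^ (p - 2) *
        eLpNorm (u - v) (ENNReal.ofReal (2 * p - 2)) μ := by
  set q := ENNReal.ofReal (2 * p - 2)
  have := holderTriple_two_mul_sub_two hp
  let w : α → ℝ := fun x => ‖|u x| + |v x|‖ ^ (p - 2)
  have hw : AEStronglyMeasurable w μ :=
    ((hu.norm.add hv.norm).norm.aemeasurable.pow_const _).aestronglyMeasurable
  have hweight :
      eLpNorm w (q / ENNReal.ofReal (p - 2)) μ ≤ (eLpNorm u q μ + eLpNorm v q μ) ^ (p - 2) :=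
    calc eLpNorm w (q / ENNReal.ofReal (p - 2)) μ
        ≤ eLpNorm (fun x => |u x| + |v x|) q μ ^ (p - 2) :=
          eLpNorm_norm_rpow_le _ q (by linarith)
      _ ≤ (eLpNorm u q μ + eLpNorm v q μ) ^ (p - 2) := by
          gcongr
          exact eLpNorm_abs_add_abs_le (by simp [q]; linarith) hu hv
  calc eLpNorm (fun x => signedPow p (u x) - signedPow p (v x)) 2 μ
      ≤ eLpNorm ((p - 1) • (w • (u - v))) 2 μ := eLpNorm_mono fun x => by
        have huv : 0 ≤ |u x| + |v x| := by positivity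
        simpa [w, Real.norm_eq_abs, abs_mul, abs_of_nonneg (by linarith : 0 ≤ p - 1),
          Real.abs_rpow_of_nonneg huv, abs_of_nonneg huv, mul_assoc] using
          abs_signedPow_sub_signedPow_le hp (u x) (v x)
    _ = ENNReal.ofReal (p - 1) * eLpNorm (w • (u - v)) 2 μ := by
        rw [eLpNorm_const_smul, Real.enorm_eq_ofReal (by linarith)]
    _ ≤ ENNReal.ofReal (p - 1) *
          (eLpNorm w (q / ENNReal.ofReal (p - 2)) μ * eLpNorm (u - v) q μ) := by
        gcongr
        exact eLpNorm_smul_le_mul_eLpNorm (hu.sub hv) hw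
    _ ≤ _ := by
        rw [mul_assoc]
        gcongr

lemma aestronglyMeasurable_signedPow_comp (p : ℝ) {u : α → ℝ}
    (hu : AEStronglyMeasurable u μ) :
    AEStronglyMeasurable (fun x => signedPow p (u x)) μ :=
  ((measurable_signedPow p).comp_aemeasurable hu.aemeasurable).aestronglyMeasurable

lemma lpNorm_signedPow (hp : 1 < p) {u : α → ℝ} (hu : AEStronglyMeasurable u μ) :
    lpNorm μ 2 (fun x => signedPow p (u x)) = lpNorm μ (2 * p - 2) u ^ (p - 1) := by
  rw [lpNorm_eq_toReal_eLpNorm two_pos (aestronglyMeasurable_signedPow_comp p hu),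
    lpNorm_eq_toReal_eLpNorm (by linarith) hu, ofReal_ofNat, eLpNorm_signedPow hp, toReal_rpow]

theorem lpNorm_signedPow_sub_le (hp : 2 ≤ p) {u v : α → ℝ}
    (hu : MemLp u (ENNReal.ofReal (2 * p - 2)) μ) (hv : MemLp v (ENNReal.ofReal (2 * p - 2)) μ) :
    lpNorm μ 2 (fun x => signedPow p (u x) - signedPow p (v x)) ≤
      (p - 1) * (lpNorm μ (2 * p - 2) u + lpNorm μ (2 * p - 2) v) ^ (p - 2) *
        lpNorm μ (2 * p - 2) (u - v) := by
  have hq : 0 < 2 * p - 2 := by linarith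
  have hφuv : AEStronglyMeasurable (fun x => signedPow p (u x) - signedPow p (v x)) μ :=
    (aestronglyMeasurable_signedPow_comp p hu.1).sub (aestronglyMeasurable_signedPow_comp p hv.1)
  rw [lpNorm_eq_toReal_eLpNorm two_pos hφuv, lpNorm_eq_toReal_eLpNorm hq hu.1,
    lpNorm_eq_toReal_eLpNorm hq hv.1, lpNorm_eq_toReal_eLpNorm hq (hu.1.sub hv.1), ofReal_ofNat]
  set q := ENNReal.ofReal (2 * p - 2)
  have hu_top := hu.eLpNorm_ne_top
  have hv_top := hv.eLpNorm_ne_top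
  have huv_top := (hu.sub hv).eLpNorm_ne_top
  calc _ ≤ (ENNReal.ofReal (p - 1) * (eLpNorm u q μ + eLpNorm v q μ) ^ (p - 2) *
          eLpNorm (u - v) q μ).toReal :=
        toReal_mono (by finiteness) (eLpNorm_signedPow_sub_le hp hu.1 hv.1)
    _ = _ := by
        rw [toReal_mul, toReal_mul, ← toReal_rpow, toReal_add hu_top hv_top,
          toReal_ofReal (by linarith)]

end Lp

/-- For `p ≥ 2` and `u, v ∈ L^{2p-2}(μ)`, the function `|u|^{p-2}u`
belongs to `L^2(μ)` with `‖|u|^{p-2}u‖_{L^2} = ‖u‖_{L^{2p-2}}^{p-1}`, and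
`‖|u|^{p-2}u − |v|^{p-2}v‖_{L^2} ≤ (p−1)(‖u‖_{L^{2p-2}} + ‖v‖_{L^{2p-2}})^{p-2} ‖u−v‖_{L^{2p-2}}`;
in particular `u ↦ −|u|^{p-2}u` is Lipschitz on balls from `L^{2p-2}(μ)` to `L^2(μ)`. -/
theorem signedPower_lipschitz_on_balls {Ω : Type*} [MeasurableSpace Ω] (μ : Measure Ω)
    (p : ℝ) (hp : 2 ≤ p) (u v : Ω → ℝ)
    (hum : Measurable u) (hvm : Measurable v)
    (hu : Integrable (fun x => |u x| ^ (2 * p - 2)) μ)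
    (hv : Integrable (fun x => |v x| ^ (2 * p - 2)) μ) :
    Integrable (fun x => |(|u x| ^ (p - 2) * u x)| ^ (2 : ℝ)) μ ∧
      lpNorm μ 2 (fun x => |u x| ^ (p - 2) * u x) = lpNorm μ (2 * p - 2) u ^ (p - 1) ∧
      lpNorm μ 2 (fun x => |u x| ^ (p - 2) * u x - |v x| ^ (p - 2) * v x) ≤
        (p - 1) * (lpNorm μ (2 * p - 2) u + lpNorm μ (2 * p - 2) v) ^ (p - 2) *
          lpNorm μ (2 * p - 2) (fun x => u x - v x) := by
  have hq : 0 < 2 * p - 2 := by linarith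
  have hu' := (integrable_abs_rpow_iff_memLp hq hum.aestronglyMeasurable).1 hu
  have hv' := (integrable_abs_rpow_iff_memLp hq hvm.aestronglyMeasurable).1 hv
  refine ⟨hu.congr (ae_of_all _ fun x => ?_), lpNorm_signedPow (by linarith) hu'.1,
    lpNorm_signedPow_sub_le hp hu' hv'⟩
  change |u x| ^ (2 * p - 2) = |signedPow p (u x)| ^ (2 : ℝ)
  rw [abs_signedPow (by linarith), ← Real.rpow_mul (abs_nonneg _)]
  ring_nf
end

section
/- Let (Ω, μ) be a finite measure space, p a real number with p ≥ 2, and u, v ∈ L^{2p-2}(μ) real-valued. Then u and v belong to L^p(μ) ∩ L^2(μ), the functions ‖u‖_{L^p(μ)}^p·u and ‖v‖_{L^p(μ)}^p·v belong to L^2(μ), and ‖ ‖u‖_{L^p(μ)}^p u − ‖v‖_{L^p(μ)}^p v ‖_{L^2(μ)} ≤ ‖u‖_{L^p(μ)}^p ‖u − v‖_{L^2(μ)} + p(‖u‖_{L^p(μ)} + ‖v‖_{L^p(μ)})^{p-1} ‖u − v‖_{L^p(μ)} ‖v‖_{L^2(μ)}. In particular, the map u ↦ ‖u‖_{L^p(μ)}^p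 u is Lipschitz on balls from L^{2p-2}(μ) to L^2(μ). -/
/-!
Write `A = ‖u‖_p`, `B = ‖v‖_p` and split `A^p u - B^p v = A^p (u - v) + (A^p - B^p) v`.
The triangle inequality in `L²` bounds the first piece by `A^p ‖u - v‖₂`; for the second, the mean
value theorem gives `|A^p - B^p| ≤ p (A + B)^(p-1) |A - B|`, and the reverse triangle inequality in
`Lᵖ` gives `|A - B| ≤ ‖u - v‖_p`. On a finite measure space `L^{2p-2} ⊆ Lᵖ ∩ L²` since
`2 ≤ p ≤ 2p - 2`, which provides all the integrability needed.
-/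

open MeasureTheory

open ENNReal

lemma abs_rpow_sub_rpow_le {p : ℝ} (hp : 1 ≤ p) {a b : ℝ} (ha : 0 ≤ a) (hb : 0 ≤ b) :
    |a ^ p - b ^ p| ≤ p * (a + b) ^ (p - 1) * |a - b| := by
  wlog hab : b ≤ a generalizing a b
  · rw [abs_sub_comm, abs_sub_comm a b, add_comm]
    exact this hb ha (le_of_not_ge hab)
  have hderiv : ∀ x ∈ Set.Icc b a,
      HasDerivWithinAt (fun y : ℝ => y ^ p) (p * x ^ (p - 1)) (Set.Icc b a) x :=
    fun x _ => (Real.hasDerivAt_rpow_const (Or.inr hp)).hasDerivWithinAt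
  have hbound : ∀ x ∈ Set.Icc b a, ‖p * x ^ (p - 1)‖ ≤ p * (a + b) ^ (p - 1) := by
    intro x ⟨hbx, hxa⟩
    have hx0 : 0 ≤ x := hb.trans hbx
    rw [Real.norm_eq_abs, abs_of_nonneg (by positivity)]
    gcongr
    linarith
  simpa [Real.norm_eq_abs] using (convex_Icc b a).norm_image_sub_le_of_norm_hasDerivWithin_le
    hderiv hbound (Set.left_mem_Icc.2 hab) (Set.right_mem_Icc.2 hab)

namespace MeasureTheory

variable {α E 𝕜 : Type*} {m : MeasurableSpace α} {μ : Measure α} {p : ℝ≥0∞}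
  [NormedAddCommGroup E] {f g : α → E}

lemma abs_lpNorm_sub_lpNorm_le (hf : MemLp f p μ) (hg : MemLp g p μ) (hp : 1 ≤ p) :
    |lpNorm f p μ - lpNorm g p μ| ≤ lpNorm (f - g) p μ := by
  rw [abs_sub_le_iff, sub_le_iff_le_add', sub_le_iff_le_add']
  exact ⟨lpNorm_le_lpNorm_add_lpNorm_sub' hg hp, lpNorm_le_lpNorm_add_lpNorm_sub hf hp⟩

lemma lpNorm_smul_sub_smul_le [NormedField 𝕜] [NormedSpace 𝕜 E] (hf : MemLp f p μ)
    (hg : MemLp g p μ) (hp : 1 ≤ p) (a b : 𝕜) :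
    lpNorm (a • f - b • g) p μ ≤ ‖a‖ * lpNorm (f - g) p μ + ‖a - b‖ * lpNorm g p μ := by
  have hsplit : a • f - b • g = a • (f - g) + (a - b) • g := by
    rw [smul_sub, sub_smul, sub_add_sub_cancel]
  rw [hsplit]
  refine (lpNorm_add_le ((hf.sub hg).const_smul a) hp).trans_eq ?_
  simp only [lpNorm_const_smul, coe_nnnorm]

end MeasureTheory

section RealExponent

variable {Ω : Type*} [MeasurableSpace Ω] {μ : Measure Ω} {r : ℝ} {f : Ω → ℝ}

lemma memLp_ofReal_iff_integrable_abs_rpow (hr : 0 < r) (hf : AEStronglyMeasurable f μ) :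
    MemLp f (.ofReal r) μ ↔ Integrable (fun x => |f x| ^ r) μ := by
  rw [← integrable_norm_rpow_iff hf (by simpa using hr) ofReal_ne_top, toReal_ofReal hr.le]
  simp only [Real.norm_eq_abs]

lemma memLp_ofReal_of_integrable_abs_rpow [IsFiniteMeasure μ] {s : ℝ} (hr : 0 < r) (hrs : r ≤ s)
    (hf : AEStronglyMeasurable f μ) (h : Integrable (fun x => |f x| ^ s) μ) :
    MemLp f (.ofReal r) μ :=
  ((memLp_ofReal_iff_integrable_abs_rpow (hr.trans_le hrs) hf).2 h).mono_exponent
    (ofReal_le_ofReal hrs)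

lemma lpNorm_eq_lpNorm_ofReal (hr : 0 < r) (hf : AEStronglyMeasurable f μ) :
    lpNorm μ r f = MeasureTheory.lpNorm f (.ofReal r) μ := by
  rw [lpNorm_eq_integral_norm_rpow_toReal (by simpa using hr) ofReal_ne_top hf,
    toReal_ofReal hr.le]
  simp only [_root_.lpNorm, Real.norm_eq_abs, one_div]

end RealExponent

/-- On a finite measure space, for `p ≥ 2` and `u, v ∈ L^{2p-2}(μ)`, both
`u, v ∈ L^p(μ) ∩ L^2(μ)`, the functions `‖u‖_{L^p}^p·u` and `‖v‖_{L^p}^p·v` are in `L^2(μ)`, and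
`‖ ‖u‖_{L^p}^p u − ‖v‖_{L^p}^p v ‖_{L^2} ≤ ‖u‖_{L^p}^p ‖u−v‖_{L^2}
  + p(‖u‖_{L^p} + ‖v‖_{L^p})^{p-1} ‖u−v‖_{L^p} ‖v‖_{L^2}`;
in particular `u ↦ ‖u‖_{L^p}^p u` is Lipschitz on balls from `L^{2p-2}(μ)` to `L^2(μ)`. -/
theorem lpNormPowSmul_lipschitz_on_balls {Ω : Type*} [MeasurableSpace Ω] (μ : Measure Ω)
    [IsFiniteMeasure μ]
    (p : ℝ) (hp : 2 ≤ p) (u v : Ω → ℝ)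
    (hum : Measurable u) (hvm : Measurable v)
    (hu : Integrable (fun x => |u x| ^ (2 * p - 2)) μ)
    (hv : Integrable (fun x => |v x| ^ (2 * p - 2)) μ) :
    Integrable (fun x => |u x| ^ p) μ ∧ Integrable (fun x => |u x| ^ (2 : ℝ)) μ ∧
    Integrable (fun x => |v x| ^ p) μ ∧ Integrable (fun x => |v x| ^ (2 : ℝ)) μ ∧
    Integrable (fun x => |lpNorm μ p u ^ p * u x| ^ (2 : ℝ)) μ ∧
    Integrable (fun x => |lpNorm μ p v ^ p * v x| ^ (2 : ℝ)) μ ∧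
    lpNorm μ 2 (fun x => lpNorm μ p u ^ p * u x - lpNorm μ p v ^ p * v x) ≤
      lpNorm μ p u ^ p * lpNorm μ 2 (fun x => u x - v x) +
        p * (lpNorm μ p u + lpNorm μ p v) ^ (p - 1) * lpNorm μ p (fun x => u x - v x) *
          lpNorm μ 2 v := by
  have hp0 : 0 < p := by linarith
  have integrable_of {w : Ω → ℝ} {r : ℝ} (hr : 0 < r) (hw : MemLp w (.ofReal r) μ) :=
    (memLp_ofReal_iff_integrable_abs_rpow hr hw.1).1 hw
  have hp2 : p ≤ 2 * p - 2 := by linarith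
  have h22 : (2 : ℝ) ≤ 2 * p - 2 := by linarith
  have hup := memLp_ofReal_of_integrable_abs_rpow hp0 hp2 hum.aestronglyMeasurable hu
  have hvp := memLp_ofReal_of_integrable_abs_rpow hp0 hp2 hvm.aestronglyMeasurable hv
  have hu2 := memLp_ofReal_of_integrable_abs_rpow two_pos h22 hum.aestronglyMeasurable hu
  have hv2 := memLp_ofReal_of_integrable_abs_rpow two_pos h22 hvm.aestronglyMeasurable hv
  refine ⟨integrable_of hp0 hup, integrable_of two_pos hu2, integrable_of hp0 hvp,
    integrable_of two_pos hv2, integrable_of two_pos (hu2.const_mul _),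
    integrable_of two_pos (hv2.const_mul _), ?_⟩
  have h2 : (1 : ℝ≥0∞) ≤ .ofReal 2 := by simp
  have hp1 : (1 : ℝ≥0∞) ≤ .ofReal p := by simpa using (by linarith : (1 : ℝ) ≤ p)
  rw [lpNorm_eq_lpNorm_ofReal hp0 hum.aestronglyMeasurable,
    lpNorm_eq_lpNorm_ofReal hp0 hvm.aestronglyMeasurable,
    lpNorm_eq_lpNorm_ofReal two_pos (by fun_prop), lpNorm_eq_lpNorm_ofReal two_pos (by fun_prop),
    lpNorm_eq_lpNorm_ofReal hp0 (by fun_prop), lpNorm_eq_lpNorm_ofReal two_pos (by fun_prop)]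
  set A := MeasureTheory.lpNorm u (.ofReal p) μ
  set B := MeasureTheory.lpNorm v (.ofReal p) μ
  have hA : 0 ≤ A := lpNorm_nonneg
  have hB : 0 ≤ B := lpNorm_nonneg
  have hAB : |A ^ p - B ^ p| ≤ p * (A + B) ^ (p - 1) * MeasureTheory.lpNorm (u - v) (.ofReal p) μ :=
    calc |A ^ p - B ^ p| ≤ p * (A + B) ^ (p - 1) * |A - B| :=
          abs_rpow_sub_rpow_le (by linarith) hA hB
      _ ≤ _ := by gcongr; exact abs_lpNorm_sub_lpNorm_le hup hvp hp1
  calc MeasureTheory.lpNorm (A ^ p • u - B ^ p • v) (.ofReal 2) μ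
      ≤ ‖A ^ p‖ * MeasureTheory.lpNorm (u - v) (.ofReal 2) μ +
          ‖A ^ p - B ^ p‖ * MeasureTheory.lpNorm v (.ofReal 2) μ :=
        lpNorm_smul_sub_smul_le hu2 hv2 h2 _ _
    _ ≤ A ^ p * MeasureTheory.lpNorm (u - v) (.ofReal 2) μ +
          p * (A + B) ^ (p - 1) * MeasureTheory.lpNorm (u - v) (.ofReal p) μ *
            MeasureTheory.lpNorm v (.ofReal 2) μ := by
        rw [Real.norm_of_nonneg (by positivity), Real.norm_eq_abs]
        exact add_le_add_right (mul_le_mul_of_nonneg_right hAB lpNorm_nonneg) _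
end

section
/- (Radon–Riesz property) Let X be a uniformly convex real Banach space and let (f_n) be a sequence in X converging weakly to f ∈ X (i.e., φ(f_n) → φ(f) for every continuous linear functional φ : X → ℝ) and such that ‖f_n‖_X → ‖f‖_X. Then f_n converges to f in norm, i.e., ‖f_n − f‖_X → 0. -/
/-!
Pick a norming functional `φ` for `f₀` (`‖φ‖ ≤ 1`, `φ f₀ = ‖f₀‖`). Then
`φ (f n) + ‖f₀‖ ≤ ‖f n + f₀‖ ≤ ‖f n‖ + ‖f₀‖`, and both bounds tend to `2 ‖f₀‖`, so the
midpoint of `f n` and `f₀` has norm tending to the common limit of their norms. Uniform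
convexity, applied after rescaling both points into the unit ball, turns this into
`‖f n - f₀‖ → 0`.
-/

open Filter Topology

theorem tendsto_norm_sub_of_tendsto_norm_add {ι E : Type*} [SeminormedAddCommGroup E]
    [NormedSpace ℝ E] [UniformConvexSpace E] {l : Filter ι} {x y : ι → E} {r : ℝ}
    (hx : Tendsto (fun i => ‖x i‖) l (𝓝 r))
    (hy : Tendsto (fun i => ‖y i‖) l (𝓝 r))
    (hxy : Tendsto (fun i => ‖x i + y i‖) l (𝓝 (2 * r))) :
    Tendsto (fun i => ‖x i - y i‖) l (𝓝 0) := by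
  refine tendsto_order.2 ⟨fun a ha => .of_forall fun i => ha.trans_le (norm_nonneg _),
    fun ε hε => ?_⟩
  rcases le_or_gt r 0 with hr | hr
  · filter_upwards [(hx.add hy).eventually (gt_mem_nhds (show r + r < ε by linarith))] with i hi
    exact (norm_sub_le _ _).trans_lt hi
  obtain ⟨δ, hδ, hconv⟩ :=
    exists_forall_closed_ball_dist_add_le_two_sub E (div_pos hε (mul_pos two_pos hr))
  -- Dividing by `R i ∈ (0, 2r)` puts both points in the unit ball at distance `≥ ε / (2r)`.
  set R : ι → ℝ := fun i => max ‖x i‖ ‖y i‖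
  have hR : Tendsto R l (𝓝 r) := by simpa using hx.max hy
  have hgap : Tendsto (fun i => ‖x i + y i‖ - R i * (2 - δ)) l (𝓝 (r * δ)) := by
    convert hxy.sub (hR.mul_const (2 - δ)) using 2; ring
  filter_upwards [hR.eventually (lt_mem_nhds hr),
    hR.eventually (gt_mem_nhds (show r < 2 * r by linarith)),
    hgap.eventually (lt_mem_nhds (mul_pos hr hδ))] with i hR0 hR2 hgap_i
  by_contra! hε_le
  have hRinv : ‖(R i)⁻¹‖ = (R i)⁻¹ := by rw [Real.norm_eq_abs, abs_inv, abs_of_pos hR0]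
  have hball : ∀ z : E, ‖z‖ ≤ R i → ‖(R i)⁻¹ • z‖ ≤ 1 := fun z hz => by
    rw [norm_smul, hRinv]; exact inv_mul_le_one_of_le₀ hz hR0.le
  have hsep : ε / (2 * r) ≤ ‖(R i)⁻¹ • x i - (R i)⁻¹ • y i‖ := by
    rw [← smul_sub, norm_smul, hRinv, inv_mul_eq_div]
    exact div_le_div₀ (norm_nonneg _) hε_le hR0 hR2.le
  have hmid := hconv (hball _ (le_max_left _ _)) (hball _ (le_max_right _ _)) hsep
  rw [← smul_add, norm_smul, hRinv, inv_mul_le_iff₀ hR0] at hmid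
  linarith

theorem tendsto_norm_add_of_weak_tendsto {ι E : Type*} [NormedAddCommGroup E] [NormedSpace ℝ E]
    {l : Filter ι} {x : ι → E} {y : E}
    (hweak : ∀ φ : E →L[ℝ] ℝ, Tendsto (fun i => φ (x i)) l (𝓝 (φ y)))
    (hnorm : Tendsto (fun i => ‖x i‖) l (𝓝 ‖y‖)) :
    Tendsto (fun i => ‖x i + y‖) l (𝓝 (2 * ‖y‖)) := by
  obtain ⟨φ, hφ, hφy⟩ := exists_dual_vector'' ℝ y
  have hlower : ∀ i, φ (x i) + ‖y‖ ≤ ‖x i + y‖ := fun i =>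
    calc φ (x i) + ‖y‖ = φ (x i + y) := by rw [map_add, hφy]; rfl
      _ ≤ ‖φ‖ * ‖x i + y‖ := (le_abs_self _).trans (φ.le_opNorm _)
      _ ≤ ‖x i + y‖ := mul_le_of_le_one_left (norm_nonneg _) hφ
  rw [two_mul]
  refine tendsto_of_tendsto_of_tendsto_of_le_of_le ?_ (hnorm.add_const _) hlower
    (fun i => norm_add_le _ _)
  simpa [hφy] using (hweak φ).add_const ‖y‖

theorem radon_riesz_general {X : Type*} [NormedAddCommGroup X] [NormedSpace ℝ X]
    [UniformConvexSpace X]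
    (f : ℕ → X) (f₀ : X)
    (hweak : ∀ φ : X →L[ℝ] ℝ, Tendsto (fun n => φ (f n)) atTop (𝓝 (φ f₀)))
    (hnorm : Tendsto (fun n => ‖f n‖) atTop (𝓝 ‖f₀‖)) :
    Tendsto (fun n => ‖f n - f₀‖) atTop (𝓝 0) :=
  tendsto_norm_sub_of_tendsto_norm_add hnorm tendsto_const_nhds
    (tendsto_norm_add_of_weak_tendsto hweak hnorm)

/-- Radon–Riesz property: In a uniformly convex real Banach space `X`,
if `f_n ⇀ f` weakly (i.e. `φ(f_n) → φ(f)` for every continuous linear functional `φ`)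
and `‖f_n‖ → ‖f‖`, then `f_n → f` in norm. -/
theorem radon_riesz {X : Type*} [NormedAddCommGroup X] [NormedSpace ℝ X]
    [CompleteSpace X] [UniformConvexSpace X]
    (f : ℕ → X) (f₀ : X)
    (hweak : ∀ φ : X →L[ℝ] ℝ, Tendsto (fun n => φ (f n)) atTop (𝓝 (φ f₀)))
    (hnorm : Tendsto (fun n => ‖f n‖) atTop (𝓝 ‖f₀‖)) :
    Tendsto (fun n => ‖f n - f₀‖) atTop (𝓝 0) :=
  radon_riesz_general f f₀ hweak hnorm
end

section
/- (Strong maximum principle) Let O ⊆ ℝ^d be a bounded, connected, open set, let h : O → ℝ be a bounded function, and let u : ℝ^d → ℝ be continuous on the closure of O and twice continuously differentiable on O, satisfying Δu(x) + h(x)u(x) ≤ 0 and u(x) ≥ 0 for all x ∈ O, u(x) = 0 for all x in the topological boundary ∂O of O, and u not identically zero on O. Then u(x) > 0 for every x ∈ O. -/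
open MeasureTheory

/-- The Laplacian `Δu(x) = ∑ i, ∂²u/∂x_i²(x)` as the sum of second partial derivatives. -/
noncomputable def lap {d : ℕ} (u : EuclideanSpace ℝ (Fin d) → ℝ)
    (x : EuclideanSpace ℝ (Fin d)) : ℝ :=
  ∑ i : Fin d, fderiv ℝ (fun y => fderiv ℝ u y (EuclideanSpace.single i (1 : ℝ))) x
    (EuclideanSpace.single i (1 : ℝ))

/-!
Since `|h| ≤ M` and `u ≥ 0`, `u` is a supersolution in the sense `Δu ≤ M u`, and it suffices to
show that the zero set of `u` is open in `O`: the set where `u > 0` is open as well, so by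
connectedness one of them is empty.

Suppose `u y = 0` while `u x₁ > 0` at a point `x₁` close to `y`, and choose `r₁ < |y - x₁| < r₂`
with `u > 0` on the sphere of radius `r₁` about `x₁`, where `u ≥ m > 0`. Hopf's barrier
`b x = exp (-α |x - x₁|²) - exp (-α r₂²)` satisfies `Δb > M b` on the annulus `r₁ ≤ |x - x₁| ≤ r₂`
once `α` is large. The function `u - m b` is nonnegative on both boundary spheres and negative at
`y`, so it attains a negative minimum inside the annulus; there `0 ≤ Δ(u - m b)`, whereas
`Δu ≤ M u ≤ M m b < Δ(m b)`.
-/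

open Set Filter Topology Metric InnerProductSpace Laplacian
open scoped RealInnerProductSpace

theorem IsLocalMin.deriv_deriv_nonneg {g : ℝ → ℝ} {a : ℝ} (hmin : IsLocalMin g a)
    (hc : ContinuousAt g a) : 0 ≤ deriv (deriv g) a := by
  by_contra! hneg
  have hconst : g =ᶠ[𝓝 a] fun _ => g a := by
    filter_upwards [hmin, isLocalMax_of_deriv_deriv_neg hneg hmin.deriv_eq_zero hc] with t h₁ h₂
    exact le_antisymm h₂ h₁
  have hderiv : deriv g =ᶠ[𝓝 a] fun _ => 0 := by
    filter_upwards [hconst.eventuallyEq_nhds] with t ht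
    rw [ht.deriv_eq, deriv_const]
  rw [hderiv.deriv_eq, deriv_const] at hneg
  exact hneg.false

theorem deriv_deriv_exp_neg_mul_quadratic (α Q b : ℝ) :
    deriv (deriv fun t : ℝ => Real.exp (-α * (Q + 2 * b * t + t ^ 2))) 0 =
      (4 * α ^ 2 * b ^ 2 - 2 * α) * Real.exp (-α * Q) := by
  have hfirst : ∀ t : ℝ, HasDerivAt (fun t : ℝ => Real.exp (-α * (Q + 2 * b * t + t ^ 2)))
      (Real.exp (-α * (Q + 2 * b * t + t ^ 2)) * (-α * (2 * b + 2 * t))) t := fun t =>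
    ((((hasDerivAt_id t).const_mul (2 * b)).const_add Q).add
      (hasDerivAt_pow 2 t)).const_mul (-α) |>.exp |>.congr_deriv (by simp)
  have hsecond : HasDerivAt
      (fun t : ℝ => Real.exp (-α * (Q + 2 * b * t + t ^ 2)) * (-α * (2 * b + 2 * t)))
      ((4 * α ^ 2 * b ^ 2 - 2 * α) * Real.exp (-α * Q)) 0 :=
    (hfirst 0).mul ((((hasDerivAt_id (0 : ℝ)).const_mul 2).const_add (2 * b)).const_mul (-α))
      |>.congr_deriv (by simp; ring)
  rw [funext fun t => (hfirst t).deriv, hsecond.deriv]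

theorem exists_pos_lt_barrier_coeff (n : ℕ) (M : ℝ) {r : ℝ} (hr : 0 < r) :
    ∃ α > 0, M < 4 * α ^ 2 * r ^ 2 - 2 * n * α := by
  set α := max 1 ((2 * n + |M| + 1) / (4 * r ^ 2))
  have hα : 1 ≤ α := le_max_left _ _
  have hαr : 2 * n + |M| + 1 ≤ α * (4 * r ^ 2) :=
    (div_le_iff₀ (by positivity)).mp (le_max_right _ _)
  refine ⟨α, by positivity, ?_⟩
  nlinarith [le_abs_self M, abs_nonneg M, mul_le_mul_of_nonneg_left hαr (by positivity : 0 ≤ α)]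

section Line

variable {E F : Type*} [NormedAddCommGroup E] [NormedSpace ℝ E]
  [NormedAddCommGroup F] [NormedSpace ℝ F]

theorem hasDerivAt_add_smul (x e : E) (s : ℝ) : HasDerivAt (fun t : ℝ => x + t • e) e s := by
  simpa using ((hasDerivAt_id s).smul_const e).const_add x

theorem ContDiffAt.iteratedFDeriv_two_apply_eq_deriv_deriv {f : E → F} {x : E}
    (hf : ContDiffAt ℝ 2 f x) (e : E) :
    iteratedFDeriv ℝ 2 f x ![e, e] = deriv (deriv fun t : ℝ => f (x + t • e)) 0 := by
  have hline : Tendsto (fun t : ℝ => x + t • e) (𝓝 0) (𝓝 x) := by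
    simpa using (hasDerivAt_add_smul x e 0).continuousAt.tendsto
  have hfirst : deriv (fun t : ℝ => f (x + t • e)) =ᶠ[𝓝 0] fun s => fderiv ℝ f (x + s • e) e := by
    filter_upwards [hline.eventually (hf.eventually (by simp))] with s hs
    exact ((hs.differentiableAt (by norm_num)).hasFDerivAt.comp_hasDerivAt s
      (hasDerivAt_add_smul x e s)).deriv
  have hsecond : HasDerivAt (fun s : ℝ => fderiv ℝ f (x + s • e) e)
      (fderiv ℝ (fderiv ℝ f) x e e) 0 := by
    have hdiff : DifferentiableAt ℝ (fderiv ℝ f) x :=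
      (hf.fderiv_right (m := 1) (by norm_num)).differentiableAt (by norm_num)
    simpa using (hdiff.hasFDerivAt.comp_hasDerivAt_of_eq 0 (hasDerivAt_add_smul x e 0)
      (by simp)).clm_apply (hasDerivAt_const 0 e)
  rw [iteratedFDeriv_two_apply, hfirst.deriv_eq, hsecond.deriv]
  rfl

end Line

theorem IsPreconnected.forall_pos_of_eventually_eq_zero {X : Type*} [TopologicalSpace X]
    {O : Set X} {u : X → ℝ} (hconn : IsPreconnected O) (hO : IsOpen O) (hu : ContinuousOn u O)
    (hnonneg : ∀ x ∈ O, 0 ≤ u x) (hzero : ∀ y ∈ O, u y = 0 → ∀ᶠ x in 𝓝 y, u x = 0)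
    (hne : ∃ x ∈ O, u x ≠ 0) : ∀ x ∈ O, 0 < u x := by
  intro x hx
  by_contra! hux
  obtain ⟨z, hzO, hzZ, hzP⟩ := hconn {y | ∀ᶠ x in 𝓝 y, u x = 0} (O ∩ u ⁻¹' Ioi 0)
    isOpen_setOfPred_eventually_nhds (hu.isOpen_inter_preimage hO isOpen_Ioi)
    (fun y hy => (hnonneg y hy).eq_or_lt.elim (fun h => .inl (hzero y hy h.symm))
      fun h => .inr ⟨hy, h⟩)
    ⟨x, hx, hzero x hx (le_antisymm hux (hnonneg x hx))⟩
    (hne.imp fun y ⟨hy, hne⟩ => ⟨hy, hy, (hnonneg y hy).lt_of_ne' hne⟩)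
  exact hzP.2.ne' hzZ.self_of_nhds

theorem exists_isLocalMin_neg_of_nonneg_on_spheres {X : Type*} [PseudoMetricSpace X]
    [ProperSpace X] {f : X → ℝ} {z : X} {r₁ r₂ : ℝ}
    (hf : ContinuousOn f (closedBall z r₂ ∩ {x | r₁ ≤ dist x z}))
    (h₁ : ∀ x ∈ sphere z r₁, 0 ≤ f x) (h₂ : ∀ x ∈ sphere z r₂, 0 ≤ f x) {y : X}
    (hy : y ∈ closedBall z r₂ ∩ {x | r₁ ≤ dist x z}) (hfy : f y < 0) :
    ∃ x, r₁ < dist x z ∧ dist x z < r₂ ∧ f x < 0 ∧ IsLocalMin f x := by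
  obtain ⟨x, hxA, hx_min⟩ := ((isCompact_closedBall z r₂).inter_right
    (isClosed_le continuous_const (by fun_prop))).exists_isMinOn ⟨y, hy⟩ hf
  have hfx : f x < 0 := (hx_min hy).trans_lt hfy
  have hr₁x : r₁ < dist x z :=
    hxA.2.lt_of_ne fun h => hfx.not_ge (h₁ x (mem_sphere.mpr h.symm))
  have hxr₂ : dist x z < r₂ :=
    (mem_closedBall.mp hxA.1).lt_of_ne fun h => hfx.not_ge (h₂ x (mem_sphere.mpr h))
  refine ⟨x, hr₁x, hxr₂, hfx, hx_min.isLocalMin <| mem_of_superset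
    ((isOpen_ball.inter (isOpen_lt continuous_const
      (by fun_prop : Continuous fun x : X => dist x z))).mem_nhds ⟨mem_ball.mpr hxr₂, hr₁x⟩)
    fun x hx => ⟨ball_subset_closedBall hx.1, show r₁ ≤ dist x z from le_of_lt hx.2⟩⟩

section Barrier

variable {E : Type*} [NormedAddCommGroup E]

noncomputable def gaussianBarrier (α R : ℝ) (z : E) : E → ℝ :=
  fun x => Real.exp (-α * ‖x - z‖ ^ 2) - Real.exp (-α * R ^ 2)

theorem gaussianBarrier_le_one {α : ℝ} (hα : 0 ≤ α) (R : ℝ) (z x : E) :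
    gaussianBarrier α R z x ≤ 1 := by
  have : Real.exp (-α * ‖x - z‖ ^ 2) ≤ 1 :=
    Real.exp_le_one_iff.mpr (by nlinarith [sq_nonneg ‖x - z‖])
  rw [gaussianBarrier]
  linarith [Real.exp_pos (-α * R ^ 2)]

theorem gaussianBarrier_eq_zero {α R : ℝ} {z x : E} (hx : dist x z = R) :
    gaussianBarrier α R z x = 0 := by
  rw [gaussianBarrier, ← dist_eq_norm, hx, sub_self]

theorem gaussianBarrier_pos {α R : ℝ} (hα : 0 < α) {z x : E} (hx : dist x z < R) :
    0 < gaussianBarrier α R z x := by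
  have : dist x z ^ 2 < R ^ 2 := pow_lt_pow_left₀ hx dist_nonneg two_ne_zero
  exact sub_pos.mpr (Real.exp_lt_exp.mpr (by rw [← dist_eq_norm]; nlinarith))

variable [InnerProductSpace ℝ E]

theorem contDiff_exp_neg_mul_norm_sub_sq (α : ℝ) (z : E) :
    ContDiff ℝ 2 fun x : E => Real.exp (-α * ‖x - z‖ ^ 2) :=
  Real.contDiff_exp.comp (contDiff_const.mul ((contDiff_norm_sq ℝ).comp
    (contDiff_id.sub contDiff_const)))

theorem contDiff_gaussianBarrier (α R : ℝ) (z : E) : ContDiff ℝ 2 (gaussianBarrier α R z) :=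
  (contDiff_exp_neg_mul_norm_sub_sq α z).sub contDiff_const

variable [FiniteDimensional ℝ E]

theorem IsLocalMin.laplacian_nonneg {f : E → ℝ} {x : E} (hmin : IsLocalMin f x)
    (hf : ContDiffAt ℝ 2 f x) : 0 ≤ Δ f x := by
  rw [laplacian_eq_iteratedFDeriv_stdOrthonormalBasis]
  refine Finset.sum_nonneg fun i _ => ?_
  rw [hf.iteratedFDeriv_two_apply_eq_deriv_deriv]
  have hline := (hasDerivAt_add_smul x (stdOrthonormalBasis ℝ E i) 0).continuousAt
  refine IsLocalMin.deriv_deriv_nonneg ?_ (hf.continuousAt.comp_of_eq hline (by simp))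
  exact IsLocalMin.comp_continuous (by simpa using hmin) hline

theorem IsLocalMin.lt_of_laplacian_le_of_lt_laplacian {u ψ : E → ℝ} {x : E} {M : ℝ}
    (hmin : IsLocalMin (u - ψ) x) (hu : ContDiffAt ℝ 2 u x) (hψ : ContDiffAt ℝ 2 ψ x)
    (hM : 0 ≤ M) (hu_lap : Δ u x ≤ M * u x) (hψ_lap : M * ψ x < Δ ψ x) : ψ x < u x := by
  have hnonneg := hmin.laplacian_nonneg (hu.sub hψ)
  rw [hu.laplacian_sub hψ] at hnonneg
  by_contra! hle
  nlinarith [mul_le_mul_of_nonneg_left hle hM]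

theorem laplacian_exp_neg_mul_norm_sub_sq (α : ℝ) (z x : E) :
    Δ (fun y => Real.exp (-α * ‖y - z‖ ^ 2)) x =
      (4 * α ^ 2 * ‖x - z‖ ^ 2 - 2 * Module.finrank ℝ E * α) * Real.exp (-α * ‖x - z‖ ^ 2) := by
  set b := stdOrthonormalBasis ℝ E
  have hterm : ∀ i, iteratedFDeriv ℝ 2 (fun y => Real.exp (-α * ‖y - z‖ ^ 2)) x ![b i, b i] =
      (4 * α ^ 2 * ⟪x - z, b i⟫ ^ 2 - 2 * α) * Real.exp (-α * ‖x - z‖ ^ 2) := fun i => by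
    have hline : ∀ t : ℝ, ‖x + t • b i - z‖ ^ 2 = ‖x - z‖ ^ 2 + 2 * ⟪x - z, b i⟫ * t + t ^ 2 :=
      fun t => by
        rw [show x + t • b i - z = (x - z) + t • b i by abel, norm_add_sq_real,
          inner_smul_right, norm_smul, b.norm_eq_one, Real.norm_eq_abs, mul_one, sq_abs]
        ring
    rw [(contDiff_exp_neg_mul_norm_sub_sq α z).contDiffAt.iteratedFDeriv_two_apply_eq_deriv_deriv]
    simp only [hline]
    exact deriv_deriv_exp_neg_mul_quadratic _ _ _
  rw [laplacian_eq_iteratedFDeriv_orthonormalBasis _ b]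
  simp only [hterm, ← Finset.sum_mul, Finset.sum_sub_distrib, ← Finset.mul_sum,
    b.sum_sq_inner_left, Finset.sum_const, Finset.card_univ, Fintype.card_fin, nsmul_eq_mul]
  ring

theorem mul_lt_laplacian_gaussianBarrier {α M r : ℝ}
    (hαM : M < 4 * α ^ 2 * r ^ 2 - 2 * Module.finrank ℝ E * α) (hM : 0 ≤ M) (hr : 0 ≤ r)
    (R : ℝ) {z x : E} (hx : r ≤ dist x z) :
    M * gaussianBarrier α R z x < Δ (gaussianBarrier α R z) x := by
  have hsq : r ^ 2 ≤ ‖x - z‖ ^ 2 := pow_le_pow_left₀ hr (dist_eq_norm x z ▸ hx) 2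
  rw [show gaussianBarrier α R z = (fun y => Real.exp (-α * ‖y - z‖ ^ 2)) -
      fun _ => Real.exp (-α * R ^ 2) from rfl,
    (contDiff_exp_neg_mul_norm_sub_sq α z).contDiffAt.laplacian_sub contDiffAt_const,
    laplacian_const, laplacian_exp_neg_mul_norm_sub_sq]
  have hcoeff : M < 4 * α ^ 2 * ‖x - z‖ ^ 2 - 2 * Module.finrank ℝ E * α := by
    nlinarith [mul_le_mul_of_nonneg_left hsq (by positivity : 0 ≤ 4 * α ^ 2)]
  simp only [Pi.sub_apply, Pi.zero_apply, sub_zero]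
  nlinarith [mul_lt_mul_of_pos_right hcoeff (Real.exp_pos (-α * ‖x - z‖ ^ 2)),
    Real.exp_pos (-α * R ^ 2)]

theorem pos_of_pos_on_sphere_of_laplacian_le {u : E → ℝ} {O : Set E} {M : ℝ} (hO : IsOpen O)
    (hu : ContDiffOn ℝ 2 u O) (hnonneg : ∀ x ∈ O, 0 ≤ u x) (hM : 0 ≤ M)
    (hlap : ∀ x ∈ O, Δ u x ≤ M * u x) {x₁ y : E} {r₁ r₂ : ℝ} (hr₁ : 0 < r₁)
    (hr₁y : r₁ < dist y x₁) (hyr₂ : dist y x₁ < r₂) (hball : closedBall x₁ r₂ ⊆ O)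
    (hsphere : ∀ x ∈ sphere x₁ r₁, 0 < u x) : 0 < u y := by
  by_contra! hy
  have : Nontrivial E := nontrivial_of_ne y x₁ (dist_pos.mp (hr₁.trans hr₁y))
  have hsphereO : sphere x₁ r₁ ⊆ O :=
    sphere_subset_closedBall.trans ((closedBall_subset_closedBall (by linarith)).trans hball)
  obtain ⟨xm, hxm, hxm_min⟩ := (isCompact_sphere x₁ r₁).exists_isMinOn
    (NormedSpace.sphere_nonempty.mpr hr₁.le) (hu.continuousOn.mono hsphereO)
  have hm : 0 < u xm := hsphere xm hxm
  obtain ⟨α, hα, hαM⟩ := exists_pos_lt_barrier_coeff (Module.finrank ℝ E) M hr₁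
  set b := gaussianBarrier α r₂ x₁
  have hψ : ContDiff ℝ 2 (u xm • b) := (contDiff_gaussianBarrier α r₂ x₁).const_smul (u xm)
  obtain ⟨xs, hr₁xs, hxsr₂, hxs_neg, hlocal⟩ := exists_isLocalMin_neg_of_nonneg_on_spheres
    ((hu.continuousOn.mono (inter_subset_left.trans hball)).sub hψ.continuous.continuousOn)
    (fun x hx => by
      have hb : b x ≤ 1 := gaussianBarrier_le_one hα.le r₂ x₁ x
      have hux : u xm ≤ u x := hxm_min hx
      change 0 ≤ u x - u xm * b x
      nlinarith)
    (fun x hx => by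
      change 0 ≤ u x - u xm * b x
      simpa [b, gaussianBarrier_eq_zero (mem_sphere.mp hx)] using hnonneg x (hball hx.le))
    ⟨mem_closedBall.mpr hyr₂.le, hr₁y.le⟩
    (by
      have hb : 0 < b y := gaussianBarrier_pos hα hyr₂
      change u y - u xm * b y < 0
      nlinarith)
  have hxsO : xs ∈ O := hball (mem_closedBall.mpr hxsr₂.le)
  have hψ_lap : M * (u xm • b) xs < Δ (u xm • b) xs := by
    rw [laplacian_smul _ (contDiff_gaussianBarrier α r₂ x₁).contDiffAt]
    change M * (u xm * _) < u xm * _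
    nlinarith [mul_lt_laplacian_gaussianBarrier hαM hM hr₁.le r₂ hr₁xs.le]
  exact hxs_neg.not_ge (sub_nonneg.mpr (hlocal.lt_of_laplacian_le_of_lt_laplacian
    (hu.contDiffAt (hO.mem_nhds hxsO)) hψ.contDiffAt hM (hlap xs hxsO) hψ_lap).le)

theorem eventually_eq_zero_of_laplacian_le {u : E → ℝ} {O : Set E} {M : ℝ} (hO : IsOpen O)
    (hu : ContDiffOn ℝ 2 u O) (hnonneg : ∀ x ∈ O, 0 ≤ u x) (hM : 0 ≤ M)
    (hlap : ∀ x ∈ O, Δ u x ≤ M * u x) {y : E} (hy : y ∈ O) (huy : u y = 0) :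
    ∀ᶠ x in 𝓝 y, u x = 0 := by
  obtain ⟨r, hr, hrO⟩ := nhds_basis_closedBall.mem_iff.mp (hO.mem_nhds hy)
  filter_upwards [ball_mem_nhds y (by positivity : 0 < r / 4)] with x₁ hx₁
  rw [mem_ball, dist_comm] at hx₁
  have hx₁O : x₁ ∈ O := hrO (mem_closedBall.mpr (by rw [dist_comm]; linarith))
  by_contra hne
  have hpos : 0 < u x₁ := (hnonneg x₁ hx₁O).lt_of_ne' hne
  have hρ : 0 < dist y x₁ := dist_pos.mpr fun h => by rw [h] at huy; linarith
  obtain ⟨δ, hδ, hδpos⟩ := Metric.eventually_nhds_iff.mp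
    ((hu.continuousOn.continuousAt (hO.mem_nhds hx₁O)).eventually (lt_mem_nhds hpos))
  have hr₁ : 0 < min δ (dist y x₁) / 2 := by positivity
  have hr₁y : min δ (dist y x₁) / 2 < dist y x₁ := by linarith [min_le_right δ (dist y x₁)]
  have hball : closedBall x₁ (r / 2) ⊆ O := fun x hx => hrO <| mem_closedBall.mpr <| by
    linarith [dist_triangle x x₁ y, mem_closedBall.mp hx, dist_comm x₁ y]
  have := pos_of_pos_on_sphere_of_laplacian_le hO hu hnonneg hM hlap hr₁ hr₁y (by linarith) hball
    fun x hx => hδpos (by rw [mem_sphere.mp hx]; linarith [min_le_left δ (dist y x₁)])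
  linarith

end Barrier

theorem lap_eq_laplacian {d : ℕ} {u : EuclideanSpace ℝ (Fin d) → ℝ} {x : EuclideanSpace ℝ (Fin d)}
    (hu : ContDiffAt ℝ 2 u x) : lap u x = Δ u x := by
  have hdiff : DifferentiableAt ℝ (fderiv ℝ u) x :=
    (hu.fderiv_right (m := 1) (by norm_num)).differentiableAt (by norm_num)
  rw [laplacian_eq_iteratedFDeriv_orthonormalBasis u (EuclideanSpace.basisFun (Fin d) ℝ), lap]
  refine Finset.sum_congr rfl fun i _ => ?_
  rw [iteratedFDeriv_two_apply, EuclideanSpace.basisFun_apply,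
    fderiv_clm_apply hdiff (differentiableAt_const _)]
  simp

theorem strong_maximum_principle_general (d : ℕ) (O : Set (EuclideanSpace ℝ (Fin d)))
    (hO : IsOpen O) (hOconn : IsConnected O)
    (h u : EuclideanSpace ℝ (Fin d) → ℝ)
    (hbdd : ∃ M : ℝ, ∀ x ∈ O, |h x| ≤ M)
    (huC2 : ContDiffOn ℝ 2 u O)
    (hineq : ∀ x ∈ O, lap u x + h x * u x ≤ 0)
    (hunneg : ∀ x ∈ O, 0 ≤ u x)
    (hunz : ∃ x ∈ O, u x ≠ 0) :
    ∀ x ∈ O, 0 < u x := by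
  obtain ⟨M, hM⟩ := hbdd
  obtain ⟨x₀, hx₀⟩ := hOconn.nonempty
  have hM₀ : 0 ≤ M := (abs_nonneg _).trans (hM x₀ hx₀)
  have hlap : ∀ x ∈ O, Δ u x ≤ M * u x := fun x hx => by
    have := hineq x hx
    rw [lap_eq_laplacian (huC2.contDiffAt (hO.mem_nhds hx))] at this
    nlinarith [neg_le_of_abs_le (hM x hx), hunneg x hx]
  exact hOconn.isPreconnected.forall_pos_of_eventually_eq_zero hO huC2.continuousOn hunneg
    (fun y hy => eventually_eq_zero_of_laplacian_le hO huC2 hunneg hM₀ hlap hy) hunz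

/-- Strong maximum principle: Let `O ⊆ ℝ^d` be a bounded, connected,
open set, `h` bounded on `O`, and `u` continuous on `closure O`, `C²` on `O`, with
`Δu + h u ≤ 0` and `u ≥ 0` on `O`, `u = 0` on `∂O`, and `u` not identically zero on
`O`. Then `u > 0` on `O`. -/
theorem strong_maximum_principle (d : ℕ) (O : Set (EuclideanSpace ℝ (Fin d)))
    (hO : IsOpen O) (hObdd : Bornology.IsBounded O) (hOconn : IsConnected O)
    (h u : EuclideanSpace ℝ (Fin d) → ℝ)
    (hbdd : ∃ M : ℝ, ∀ x ∈ O, |h x| ≤ M)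
    (hucont : ContinuousOn u (closure O)) (huC2 : ContDiffOn ℝ 2 u O)
    (hineq : ∀ x ∈ O, lap u x + h x * u x ≤ 0)
    (hunneg : ∀ x ∈ O, 0 ≤ u x)
    (hubd : ∀ x ∈ frontier O, u x = 0)
    (hunz : ∃ x ∈ O, u x ≠ 0) :
    ∀ x ∈ O, 0 < u x :=
  strong_maximum_principle_general d O hO hOconn h u hbdd huC2 hineq hunneg hunz
end
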